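/- Let R = ℤ[x,y]/(x⁴, y² − x·y). In R set c₁ = 2x + 3y, c₂ = 2x² + 12xy, c₃ = 28x²y, c₄ = 47x³y, and c = 1 + c₁ + c₂ + c₃ + c₄. Then (1 − y)³ · c = 1 + 2x + 2x² in R, and furthermore c₁·y³ = 5·x³y, c₂·y² = 14·x³y, c₃·y = 28·x³y in R. -/
import Mathlib


open MvPolynomial

/-- The ring `R = ℤ[x,y]/(x⁴, y² - x·y)`, the Chow ring of the blow-up of `ℙ⁴` at a point. -/
noncomputable abbrev R12 : Type :=
  MvPolynomial (Fin 2) ℤ ⧸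
    Ideal.span {(X 0 : MvPolynomial (Fin 2) ℤ) ^ 4, (X 1 : MvPolynomial (Fin 2) ℤ) ^ 2 - X 0 * X 1}

/-- The class `x` in `R`. -/
noncomputable def x12 : R12 := Ideal.Quotient.mk _ (X 0)

/-- The class `y` in `R`. -/
noncomputable def y12 : R12 := Ideal.Quotient.mk _ (X 1)

set_option maxHeartbeats 2000000 in
/-- The Chow ring computation in the proof of Lemma 5.7 (G24XF+mat): with
`c₁ = 2x + 3y`, `c₂ = 2x² + 12xy`, `c₃ = 28x²y`, `c₄ = 47x³y` and `c = 1 + c₁ + c₂ + c₃ + c₄`,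
in `R = ℤ[x,y]/(x⁴, y² - xy)` one has `(1 - y)³ · c = 1 + 2x + 2x²`, and moreover
`c₁·y³ = 5·x³y`, `c₂·y² = 14·x³y`, `c₃·y = 28·x³y`. -/
theorem stmt_12 (c₁ c₂ c₃ c₄ c : R12)
    (h₁ : c₁ = 2 * x12 + 3 * y12)
    (h₂ : c₂ = 2 * x12 ^ 2 + 12 * (x12 * y12))
    (h₃ : c₃ = 28 * (x12 ^ 2 * y12))
    (h₄ : c₄ = 47 * (x12 ^ 3 * y12))
    (hc : c = 1 + c₁ + c₂ + c₃ + c₄) :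
    (1 - y12) ^ 3 * c = 1 + 2 * x12 + 2 * x12 ^ 2 ∧
      c₁ * y12 ^ 3 = 5 * (x12 ^ 3 * y12) ∧
        c₂ * y12 ^ 2 = 14 * (x12 ^ 3 * y12) ∧
          c₃ * y12 = 28 * (x12 ^ 3 * y12) := by
  have hx : x12 ^ 4 = 0 := by
    rw [x12, ← map_pow, Ideal.Quotient.eq_zero_iff_mem]
    exact Ideal.subset_span (by simp)
  have hy : y12 ^ 2 = x12 * y12 := by
    rw [x12, y12, ← map_pow, ← map_mul, Ideal.Quotient.eq]
    exact Ideal.subset_span (by simp)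
  subst h₁ h₂ h₃ h₄ hc
  refine ⟨?_, ?_, ?_, ?_⟩
  · linear_combination ((-71) * (y12) + (113) * (x12 * y12) + (-47) * (x12 ^ 2 * y12)) * hx + ((-6) * (1) + (-22) * (x12) + (-47) * (x12 ^ 2) + (-71) * (x12 ^ 3) + (8) * (y12) + (31) * (x12 * y12) + (70) * (x12 ^ 2 * y12) + (113) * (x12 ^ 3 * y12) + (-3) * (y12 ^ 2) + (-12) * (x12 * y12 ^ 2) + (-28) * (x12 ^ 2 * y12 ^ 2) + (-47) * (x12 ^ 3 * y12 ^ 2) + (113) * (x12 ^ 4) + (-47) * (x12 ^ 4 * y12) + (-47) * (x12 ^ 5)) * hy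
  · linear_combination ((5) * (x12 * y12) + (3) * (y12 ^ 2) + (5) * (x12 ^ 2)) * hy
  · linear_combination ((14) * (x12 ^ 2) + (12) * (x12 * y12)) * hy
  · linear_combination ((28) * (x12 ^ 2)) * hy
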